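/- Let L be a lattice, a ∈ L a neutral element, and [a) = {x ∈ L : a ≤ x} the principal coideal (filter) above a. If a ⊔ x is a modular element of the sublattice [a), then a ⊔ x is a modular element of L. -/

import Mathlib

/-!
Write `m = a ⊔ x`. For `y ≤ z`, modularity of `m` in `[a)` applied to `a ⊔ y ≤ a ⊔ z` computes
`(m ⊔ y) ⊓ (a ⊔ z)`, and meeting with `z` recovers `(m ⊔ y) ⊓ z`. Neutrality of `a` is what makes
both steps work: `a ⊔ -` distributes over `⊓`, which turns `m ⊓ (a ⊔ z)` into `a ⊔ m ⊓ z`, and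
`z ⊓ (a ⊔ u) = a ⊓ z ⊔ u` for `u ≤ z`, which removes the `a` again.
-/

section

variable {L : Type*} [Lattice L]

/-- Grätzer's characterisation of neutral elements: `a` is neutral iff this median identity holds
for all `y`, `z`. -/
def IsNeutral (a : L) : Prop :=
  ∀ y z : L, a ⊓ y ⊔ y ⊓ z ⊔ z ⊓ a = (a ⊔ y) ⊓ (y ⊔ z) ⊓ (z ⊔ a)

def IsModularElement (m : L) : Prop :=
  ∀ y z : L, y ≤ z → (m ⊔ y) ⊓ z = m ⊓ z ⊔ y

namespace IsNeutral

variable {a : L}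

theorem inf_sup_of_le (ha : IsNeutral a) {u z : L} (huz : u ≤ z) :
    z ⊓ (a ⊔ u) = a ⊓ z ⊔ u :=
  calc z ⊓ (a ⊔ u) = (a ⊔ z) ⊓ (z ⊔ u) ⊓ (u ⊔ a) := by order
    _ = a ⊓ z ⊔ z ⊓ u ⊔ u ⊓ a := (ha z u).symm
    _ = a ⊓ z ⊔ u := by order

theorem sup_inf_sup_right (ha : IsNeutral a) (p q : L) :
    a ⊔ p ⊓ (a ⊔ q) = (a ⊔ p) ⊓ (a ⊔ q) :=
  calc a ⊔ p ⊓ (a ⊔ q) = a ⊓ p ⊔ p ⊓ (a ⊔ q) ⊔ (a ⊔ q) ⊓ a := by order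
    _ = (a ⊔ p) ⊓ (p ⊔ (a ⊔ q)) ⊓ (a ⊔ q ⊔ a) := ha p (a ⊔ q)
    _ = (a ⊔ p) ⊓ (a ⊔ q) := by order

theorem sup_inf_left (ha : IsNeutral a) (p q : L) : a ⊔ p ⊓ q = (a ⊔ p) ⊓ (a ⊔ q) :=
  calc a ⊔ p ⊓ q = a ⊔ (a ⊓ p ⊔ p ⊓ q ⊔ q ⊓ a) := by order
    _ = a ⊔ (a ⊔ p) ⊓ (p ⊔ q) ⊓ (q ⊔ a) := by rw [ha p q]
    _ = a ⊔ (p ⊔ q) ⊓ (a ⊔ p) ⊓ (a ⊔ q) := by order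
    _ = (a ⊔ (p ⊔ q) ⊓ (a ⊔ p)) ⊓ (a ⊔ q) := ha.sup_inf_sup_right _ q
    _ = (a ⊔ p) ⊓ (a ⊔ q) := by rw [ha.sup_inf_sup_right (p ⊔ q) p]; order

theorem isModularElement_of_modular_above (ha : IsNeutral a) {m : L} (ham : a ≤ m)
    (hm : ∀ y z : L, a ≤ y → a ≤ z → y ≤ z → (m ⊔ y) ⊓ z = m ⊓ z ⊔ y) :
    IsModularElement m := by
  intro y z hyz
  have hmz : m ⊓ (a ⊔ z) = a ⊔ m ⊓ z := by
    rw [ha.sup_inf_left, sup_eq_right.mpr ham]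
  have habove : (m ⊔ y) ⊓ (a ⊔ z) = a ⊔ (m ⊓ z ⊔ y) := by
    have := hm (a ⊔ y) (a ⊔ z) le_sup_left le_sup_left (sup_le_sup_left hyz a)
    rw [hmz] at this
    calc (m ⊔ y) ⊓ (a ⊔ z) = (m ⊔ (a ⊔ y)) ⊓ (a ⊔ z) := by rw [← sup_assoc, sup_eq_left.mpr ham]
      _ = a ⊔ m ⊓ z ⊔ (a ⊔ y) := this
      _ = a ⊔ (m ⊓ z ⊔ y) := by order
  calc (m ⊔ y) ⊓ z = z ⊓ ((m ⊔ y) ⊓ (a ⊔ z)) := by order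
    _ = a ⊓ z ⊔ (m ⊓ z ⊔ y) := by rw [habove, ha.inf_sup_of_le (sup_le inf_le_right hyz)]
    _ = m ⊓ z ⊔ y := by order

end IsNeutral

end

theorem modular_in_filter_implies_modular {L : Type*} [Lattice L]
    (a x : L)
    (hn : ∀ y z : L, (a ⊓ y) ⊔ (y ⊓ z) ⊔ (z ⊓ a) = (a ⊔ y) ⊓ (y ⊔ z) ⊓ (z ⊔ a))
    (h : ∀ y z : L, a ≤ y → a ≤ z → y ≤ z →
      ((a ⊔ x) ⊔ y) ⊓ z = ((a ⊔ x) ⊓ z) ⊔ y) :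
    ∀ y z : L, y ≤ z → ((a ⊔ x) ⊔ y) ⊓ z = ((a ⊔ x) ⊓ z) ⊔ y :=
  IsNeutral.isModularElement_of_modular_above hn le_sup_left h
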